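/- arXiv:2501.14657 — 3 statements merged into one kernel-verified Lean document; each statement's English description precedes it below -/
import Mathlib

section
/- Let n ≥ 3 be odd, λ = 2·cos(π/n), and let P_i be the integer polynomials with P_0 = 0, P_1 = 1, P_{i+1}(X) = X·P_i(X) + P_{i−1}(X). Then for all 0 ≤ i ≤ n, the congruence P_{n−i}(λ) ≡ P_i(λ) (mod 2ℤ[λ]) holds. -/
open Polynomial

/-- The polynomials `P_0 = 0`, `P_1 = 1`, `P_{i+1} = X·P_i + P_{i-1}`. -/
noncomputable def Ppoly : ℕ → Polynomial ℤ
  | 0 => 0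
  | 1 => 1
  | (i + 2) => X * Ppoly (i + 1) + Ppoly i

/-- Chebyshev-like sequence with a minus sign. -/
noncomputable def Qpoly : ℕ → Polynomial ℤ
  | 0 => 0
  | 1 => 1
  | (i + 2) => X * Qpoly (i + 1) - Qpoly i

lemma Ppoly_mod_two : ∀ i : ℕ, ∃ r : Polynomial ℤ, Ppoly i = Qpoly i + 2 * r := by
  intro i
  induction i using Nat.twoStepInduction with
  | zero => exact ⟨0, by simp [Ppoly, Qpoly]⟩
  | one => exact ⟨0, by simp [Ppoly, Qpoly]⟩
  | more i ih1 ih2 =>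
    obtain ⟨r1, h1⟩ := ih1
    obtain ⟨r2, h2⟩ := ih2
    exact ⟨Qpoly i + X * r2 + r1, by rw [Ppoly, Qpoly, h1, h2]; ring⟩

lemma Qpoly_sin (θ : ℝ) : ∀ i : ℕ,
    (aeval (2 * Real.cos θ) (Qpoly i) : ℝ) * Real.sin θ = Real.sin (i * θ) := by
  intro i
  induction i using Nat.twoStepInduction with
  | zero => simp [Qpoly]
  | one => simp [Qpoly]
  | more i ih1 ih2 =>
    have key : ((i + 2 : ℕ) : ℝ) * θ = ((i + 1 : ℕ) : ℝ) * θ + θ := by push_cast; ring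
    have key2 : ((i : ℕ) : ℝ) * θ = ((i + 1 : ℕ) : ℝ) * θ - θ := by push_cast; ring
    rw [Qpoly, key, Real.sin_add]
    rw [key2, Real.sin_sub] at ih1
    simp only [map_sub, map_mul, aeval_X, map_ofNat]
    linear_combination 2 * Real.cos θ * ih2 - ih1

/-- For odd `n ≥ 3` and `λ = 2 cos(π/n)`, for all `0 ≤ i ≤ n` we have
`P_{n−i}(λ) ≡ P_i(λ) (mod 2ℤ[λ])`. -/
theorem stmt12 (n : ℕ) (hn : 3 ≤ n) (hodd : Odd n)
    (lam : ℝ) (hlam : lam = 2 * Real.cos (Real.pi / n)) :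
    ∀ i : ℕ, i ≤ n →
      ∃ z : Algebra.adjoin ℤ ({lam} : Set ℝ),
        Polynomial.aeval lam (Ppoly (n - i)) - Polynomial.aeval lam (Ppoly i)
          = 2 * (z : ℝ) := by
  intro i hi
  set θ : ℝ := Real.pi / n with hθ
  have hn0 : (0 : ℝ) < n := by positivity
  have hsin : Real.sin θ ≠ 0 := by
    refine ne_of_gt (Real.sin_pos_of_pos_of_lt_pi (by positivity) ?_)
    rw [hθ, div_lt_iff₀ hn0]
    nlinarith [Real.pi_pos, show (3:ℝ) ≤ n from by exact_mod_cast hn]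
  -- Q (n-i) (lam) = Q i (lam)
  have hcast : ((n - i : ℕ) : ℝ) * θ = Real.pi - (i : ℝ) * θ := by
    have : ((n - i : ℕ) : ℝ) = (n : ℝ) - i := by
      push_cast [Nat.cast_sub hi]; ring
    rw [this, hθ]
    field_simp
  have hQ : (aeval lam (Qpoly (n - i)) : ℝ) = aeval lam (Qpoly i) := by
    have h1 := Qpoly_sin θ (n - i)
    have h2 := Qpoly_sin θ i
    rw [hcast, Real.sin_pi_sub] at h1
    rw [← hlam] at h1 h2
    exact mul_right_cancel₀ hsin (h1.trans h2.symm)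
  obtain ⟨r1, hr1⟩ := Ppoly_mod_two (n - i)
  obtain ⟨r2, hr2⟩ := Ppoly_mod_two i
  have hmem : ∀ q : Polynomial ℤ, (aeval lam q : ℝ) ∈ Algebra.adjoin ℤ ({lam} : Set ℝ) := by
    intro q
    rw [Algebra.adjoin_singleton_eq_range_aeval]
    exact ⟨q, rfl⟩
  refine ⟨⟨aeval lam r1 - aeval lam r2, sub_mem (hmem r1) (hmem r2)⟩, ?_⟩
  rw [hr1, hr2]
  simp only [map_add, map_mul, map_ofNat]
  rw [hQ]
  push_cast
  ring
end

section
/- Let p ≥ 7 be prime, λ = 2·cos(π/p), and P_i the polynomials with P_0 = 0, P_1 = 1, P_{i+1} = X·P_i + P_{i−1}. Then in ℤ[λ]/2ℤ[λ], the element (λ² + 1)·P_{(p−3)/2}(λ), written in the basis 1, λ, …, λ^{(p−3)/2}, has coefficient of λ^{(p−5)/2} congruent to p − 4, which is odd; in particular (λ²+1)·P_{(p−3)/2}(λ) ≢ P_{(p−1)/2}(λ) (mod 2ℤ[λ]). -/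
open Polynomial

noncomputable def Spoly : ℕ → Polynomial ℤ
  | 0 => 0
  | 1 => 1
  | (i + 2) => X * Spoly (i + 1) - Spoly i

lemma Ppoly_zero : Ppoly 0 = 0 := rfl
lemma Ppoly_one : Ppoly 1 = 1 := rfl
lemma Ppoly_two_step (i : ℕ) : Ppoly (i + 2) = X * Ppoly (i + 1) + Ppoly i := rfl
lemma Spoly_zero : Spoly 0 = 0 := rfl
lemma Spoly_one : Spoly 1 = 1 := rfl
lemma Spoly_two_step (i : ℕ) : Spoly (i + 2) = X * Spoly (i + 1) - Spoly i := rfl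

lemma two_step_induction {f : ℕ → Prop} (h0 : f 0) (h1 : f 1)
    (h : ∀ i, f i → f (i + 1) → f (i + 2)) : ∀ i, f i := by
  have H : ∀ i, f i ∧ f (i + 1) := by
    intro i
    induction i with
    | zero => exact ⟨h0, h1⟩
    | succ n ih => exact ⟨ih.2, h n ih.1 ih.2⟩
  exact fun i => (H i).1

lemma Ppoly_monic : ∀ i, (Ppoly (i + 1)).Monic ∧ (Ppoly (i + 1)).natDegree = i := by
  have key : ∀ i, ((Ppoly (i + 1)).Monic ∧ (Ppoly (i + 1)).natDegree = i) ∧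
      ((Ppoly (i + 2)).Monic ∧ (Ppoly (i + 2)).natDegree = i + 1) := by
    intro i
    induction i with
    | zero =>
      refine ⟨⟨by rw [Ppoly_one]; exact monic_one, by rw [Ppoly_one]; exact natDegree_one⟩, ?_⟩
      have h2 : Ppoly 2 = X := by
        rw [Ppoly_two_step 0, Ppoly_one, Ppoly_zero, mul_one, add_zero]
      rw [h2]
      exact ⟨monic_X, natDegree_X⟩
    | succ n ih =>
      refine ⟨ih.2, ?_⟩
      have hm : (X * Ppoly (n + 2)).Monic := monic_X.mul ih.2.1
      have hmd : (X * Ppoly (n + 2)).natDegree = n + 2 := by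
        rw [monic_X.natDegree_mul ih.2.1, natDegree_X, ih.2.2]
        omega
      have hd : (Ppoly (n + 1)).degree < (X * Ppoly (n + 2)).degree := by
        rw [degree_eq_natDegree ih.1.1.ne_zero, degree_eq_natDegree hm.ne_zero, ih.1.2, hmd]
        exact_mod_cast Nat.lt_add_of_pos_right (by norm_num)
      constructor
      · rw [Ppoly_two_step (n + 1)]
        exact hm.add_of_left hd
      · rw [Ppoly_two_step (n + 1), natDegree_eq_of_degree_eq (degree_add_eq_left_of_degree_lt hd), hmd]
  exact fun i => (key i).1

lemma Spoly_monic : ∀ i, (Spoly (i + 1)).Monic ∧ (Spoly (i + 1)).natDegree = i := by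
  have key : ∀ i, ((Spoly (i + 1)).Monic ∧ (Spoly (i + 1)).natDegree = i) ∧
      ((Spoly (i + 2)).Monic ∧ (Spoly (i + 2)).natDegree = i + 1) := by
    intro i
    induction i with
    | zero =>
      refine ⟨⟨by rw [Spoly_one]; exact monic_one, by rw [Spoly_one]; exact natDegree_one⟩, ?_⟩
      have h2 : Spoly 2 = X := by
        rw [Spoly_two_step 0, Spoly_one, Spoly_zero, mul_one, sub_zero]
      rw [h2]
      exact ⟨monic_X, natDegree_X⟩
    | succ n ih =>
      refine ⟨ih.2, ?_⟩
      have hm : (X * Spoly (n + 2)).Monic := monic_X.mul ih.2.1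
      have hmd : (X * Spoly (n + 2)).natDegree = n + 2 := by
        rw [monic_X.natDegree_mul ih.2.1, natDegree_X, ih.2.2]
        omega
      have hd : (-Spoly (n + 1)).degree < (X * Spoly (n + 2)).degree := by
        rw [degree_neg, degree_eq_natDegree ih.1.1.ne_zero, degree_eq_natDegree hm.ne_zero,
          ih.1.2, hmd]
        exact_mod_cast Nat.lt_add_of_pos_right (by norm_num)
      constructor
      · rw [Spoly_two_step (n + 1), sub_eq_add_neg]
        exact hm.add_of_left hd
      · rw [Spoly_two_step (n + 1), sub_eq_add_neg,
          natDegree_eq_of_degree_eq (degree_add_eq_left_of_degree_lt hd), hmd]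
  exact fun i => (key i).1

lemma Ppoly_coeff_eq_zero : ∀ i, ∀ j, (i + j) % 2 = 0 → (Ppoly i).coeff j = 0 := by
  apply two_step_induction
  · intro j _; rw [Ppoly_zero, coeff_zero]
  · intro j hj
    rw [Ppoly_one, coeff_one, if_neg (by omega : j ≠ 0)]
  · intro i ih1 ih2 j hj
    rw [Ppoly_two_step, coeff_add]
    cases j with
    | zero =>
      rw [mul_coeff_zero, coeff_X_zero, zero_mul, zero_add]
      exact ih1 0 (by omega)
    | succ k =>
      rw [coeff_X_mul, ih2 k (by omega), ih1 (k + 1) (by omega), add_zero]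

lemma Spoly_map_eq : ∀ i, (Spoly i).map (Int.castRingHom (ZMod 2)) =
    (Ppoly i).map (Int.castRingHom (ZMod 2)) := by
  apply two_step_induction
  · rw [Spoly_zero, Ppoly_zero]
  · rw [Spoly_one, Ppoly_one]
  · intro i ih1 ih2
    rw [Spoly_two_step, Ppoly_two_step, Polynomial.map_sub, Polynomial.map_add,
      Polynomial.map_mul, Polynomial.map_mul, ih1, ih2]
    have h2 : (2 : Polynomial (ZMod 2)) = 0 := by
      rw [← map_ofNat (C : ZMod 2 →+* Polynomial (ZMod 2)) 2, show ((2 : ZMod 2)) = 0 from rfl,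
        map_zero]
    linear_combination (-(Ppoly i).map (Int.castRingHom (ZMod 2))) * h2

lemma Spoly_eval (θ : ℝ) : ∀ i : ℕ,
    (Polynomial.aeval (2 * Real.cos θ) (Spoly i)) * Real.sin θ = Real.sin (i * θ) := by
  apply two_step_induction
  · simp [Spoly_zero]
  · simp [Spoly_one]
  · intro i ih1 ih2
    rw [Spoly_two_step, map_sub, map_mul, aeval_X, sub_mul, mul_assoc, ih1, ih2]
    have h1 : ((i + 2 : ℕ) : ℝ) * θ = ((i + 1 : ℕ) : ℝ) * θ + θ := by push_cast; ring
    have h2 : ((i : ℕ) : ℝ) * θ = ((i + 1 : ℕ) : ℝ) * θ - θ := by push_cast; ring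
    rw [h1, h2, Real.sin_add, Real.sin_sub]
    ring


set_option maxHeartbeats 1000000 in
/-- For a prime `p ≥ 7` and `λ = 2 cos(π/p)`: the element `(λ²+1)·P_{(p−3)/2}(λ)`,
written in the `ℤ`-basis `1, λ, …, λ^{(p−3)/2}` of `ℤ[λ]`, has coefficient of
`λ^{(p−5)/2}` congruent to `p − 4` mod 2, which is odd; in particular
`(λ²+1)·P_{(p−3)/2}(λ) ≢ P_{(p−1)/2}(λ) (mod 2ℤ[λ])`. -/
theorem stmt13 (p : ℕ) (hp : p.Prime) (h7 : 7 ≤ p)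
    (lam : ℝ) (hlam : lam = 2 * Real.cos (Real.pi / p)) :
    (∃ c : ℕ → ℤ,
      (lam ^ 2 + 1) * Polynomial.aeval lam (Ppoly ((p - 3) / 2)) =
        ∑ j ∈ Finset.range ((p - 1) / 2), (c j : ℝ) * lam ^ j ∧
      c ((p - 5) / 2) % 2 = ((p : ℤ) - 4) % 2) ∧
    Odd ((p : ℤ) - 4) ∧
    ¬ ∃ z : Algebra.adjoin ℤ ({lam} : Set ℝ),
        (lam ^ 2 + 1) * Polynomial.aeval lam (Ppoly ((p - 3) / 2)) -
          Polynomial.aeval lam (Ppoly ((p - 1) / 2)) = 2 * (z : ℝ) := by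
  -- p = 2q+7
  obtain ⟨q, hq⟩ : ∃ q, p = 2 * q + 7 := by
    have hodd : Odd p := hp.odd_of_ne_two (by omega)
    obtain ⟨k, hk⟩ := hodd
    exact ⟨k - 3, by omega⟩
  have hp3 : (p - 3) / 2 = q + 2 := by omega
  have hp1 : (p - 1) / 2 = q + 3 := by omega
  have hp5 : (p - 5) / 2 = q + 1 := by omega
  rw [hp3, hp1, hp5]
  have hppos : (0 : ℝ) < p := by positivity
  -- the candidate minimal polynomial
  set μ : Polynomial ℤ := Spoly (q + 4) - Spoly (q + 3) with hμdef
  have hS4 := Spoly_monic (q + 3)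
  have hS3 := Spoly_monic (q + 2)
  have hdlt : (Spoly (q + 3)).degree < (Spoly (q + 4)).degree := by
    rw [degree_eq_natDegree hS3.1.ne_zero, degree_eq_natDegree hS4.1.ne_zero, hS3.2, hS4.2]
    exact_mod_cast by omega
  have hdlt' : (-Spoly (q + 3)).degree < (Spoly (q + 4)).degree := by rwa [degree_neg]
  have hμmonic : μ.Monic := by
    rw [hμdef, sub_eq_add_neg]; exact hS4.1.add_of_left hdlt'
  have hμdeg : μ.natDegree = q + 3 := by
    rw [hμdef, sub_eq_add_neg,
      natDegree_eq_of_degree_eq (degree_add_eq_left_of_degree_lt hdlt'), hS4.2]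
  -- μ(λ) = 0
  have hsin : Real.sin (Real.pi / p) ≠ 0 := by
    refine ne_of_gt (Real.sin_pos_of_pos_of_lt_pi (by positivity) ?_)
    have h1p : (1 : ℝ) < p := by exact_mod_cast (by omega : 1 < p)
    rw [div_lt_iff₀ hppos]
    nlinarith [Real.pi_pos]
  have hμ0 : Polynomial.aeval lam μ = 0 := by
    have e1 := Spoly_eval (Real.pi / p) (q + 4)
    have e2 := Spoly_eval (Real.pi / p) (q + 3)
    have hpne : (p : ℝ) ≠ 0 := ne_of_gt hppos
    have h1 : ((q + 4 : ℕ) : ℝ) * (Real.pi / p) = Real.pi / 2 + Real.pi / (2 * p) := by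
      rw [hq]; push_cast; field_simp; ring
    have h2 : ((q + 3 : ℕ) : ℝ) * (Real.pi / p) = Real.pi / 2 - Real.pi / (2 * p) := by
      rw [hq]; push_cast; field_simp; ring
    have hps : Real.sin (((q + 4 : ℕ) : ℝ) * (Real.pi / p)) =
        Real.sin (((q + 3 : ℕ) : ℝ) * (Real.pi / p)) := by
      rw [h1, h2, Real.sin_add, Real.sin_sub, Real.sin_pi_div_two, Real.cos_pi_div_two]
      ring
    have hmul : Polynomial.aeval lam μ * Real.sin (Real.pi / p) = 0 := by
      rw [hμdef, map_sub, sub_mul, hlam, e1, e2, hps, sub_self]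
    exact (mul_eq_zero.mp hmul).resolve_right hsin
  -- λ is integral over ℚ
  have hμQ0 : Polynomial.aeval lam (μ.map (algebraMap ℤ ℚ)) = 0 := by
    rw [aeval_map_algebraMap, hμ0]
  have hint : IsIntegral ℚ lam :=
    ⟨μ.map (algebraMap ℤ ℚ), hμmonic.map _, by rw [← Polynomial.aeval_def, hμQ0]⟩
  set ψ : Polynomial ℚ := minpoly ℚ lam with hψdef
  set d : ℕ := ψ.natDegree with hddef
  have hψmonic : ψ.Monic := minpoly.monic hint
  have hψlam : Polynomial.aeval lam ψ = 0 := minpoly.aeval ℚ lam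
  -- the root of unity
  set ζ : ℂ := Complex.exp (2 * Real.pi * Complex.I / (2 * p)) with hζdef
  have hprim : IsPrimitiveRoot ζ (2 * p) := by
    have := Complex.isPrimitiveRoot_exp (2 * p) (by omega)
    simpa using this
  have hζ0 : ζ ≠ 0 := Complex.exp_ne_zero _
  have hζlam : (lam : ℂ) = ζ + ζ⁻¹ := by
    have hpC : (p : ℂ) ≠ 0 := Nat.cast_ne_zero.mpr (by omega)
    have hx : ζ = Complex.exp ((Real.pi / p : ℝ) * Complex.I) := by
      rw [hζdef]
      congr 1
      push_cast
      field_simp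
    have hinv : ζ⁻¹ = Complex.exp (((-(Real.pi / p) : ℝ)) * Complex.I) := by
      rw [hx, ← Complex.exp_neg]
      congr 1
      push_cast
      ring
    rw [hinv, hx, Complex.exp_mul_I, Complex.exp_mul_I, hlam]
    push_cast [Complex.ofReal_cos, Complex.ofReal_sin]
    rw [Complex.cos_neg, Complex.sin_neg]
    ring
  have hζquad : ζ ^ 2 + 1 = (lam : ℂ) * ζ := by
    rw [hζlam]
    field_simp
  -- ψ(lam) = 0 in ℂ
  have hQ0 : Polynomial.aeval ((lam : ℂ)) ψ = 0 := by
    rw [show ((lam : ℂ)) = algebraMap ℝ ℂ lam from rfl, aeval_algebraMap_apply, hψlam, map_zero]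
  set Q : Polynomial ℚ :=
    ∑ i ∈ Finset.range (d + 1), C (ψ.coeff i) * (X ^ 2 + 1) ^ i * X ^ (d - i) with hQdef
  have hQζ : Polynomial.aeval ζ Q = 0 := by
    rw [hQdef, map_sum]
    have key : ∀ i ∈ Finset.range (d + 1),
        Polynomial.aeval ζ (C (ψ.coeff i) * (X ^ 2 + 1) ^ i * X ^ (d - i)) =
          (ψ.coeff i • ((lam : ℂ)) ^ i) * ζ ^ d := by
      intro i hi
      rw [Finset.mem_range] at hi
      rw [map_mul, map_mul, aeval_C, map_pow, map_pow, map_add, map_pow, aeval_X, map_one,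
        hζquad, mul_pow, Algebra.smul_def]
      have hzz : ζ ^ i * ζ ^ (d - i) = ζ ^ d := by
        rw [← pow_add]
        congr 1
        omega
      linear_combination (algebraMap ℚ ℂ (ψ.coeff i) * ((lam : ℂ)) ^ i) * hzz
    rw [Finset.sum_congr rfl key, ← Finset.sum_mul]
    have hsum : ∑ i ∈ Finset.range (d + 1), ψ.coeff i • ((lam : ℂ)) ^ i =
        Polynomial.aeval ((lam : ℂ)) ψ :=
      (aeval_eq_sum_range' (by omega : ψ.natDegree < d + 1) _).symm
    rw [hsum, hQ0, zero_mul]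
  have hX21 : ((X ^ 2 + 1 : Polynomial ℚ)).Monic := by
    have h1 : (1 : Polynomial ℚ).degree < (X ^ 2 : Polynomial ℚ).degree := by
      rw [degree_one, degree_X_pow]
      exact_mod_cast by norm_num
    exact (monic_X_pow 2).add_of_left h1
  have hQcoeff : Q.coeff (2 * d) = 1 := by
    rw [hQdef, finset_sum_coeff, Finset.sum_eq_single d]
    · rw [Nat.sub_self, pow_zero, mul_one, coeff_C_mul]
      have hmon : ((X ^ 2 + 1 : Polynomial ℚ) ^ d).Monic := hX21.pow d
      have hdeg2 : ((X ^ 2 + 1 : Polynomial ℚ) ^ d).natDegree = 2 * d := by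
        rw [hX21.natDegree_pow]
        have : ((X ^ 2 + 1 : Polynomial ℚ)).natDegree = 2 := by
          simpa using natDegree_X_pow_add_C (n := 2) (r := (1 : ℚ))
        rw [this]
        ring
      have hc1 : ((X ^ 2 + 1 : Polynomial ℚ) ^ d).coeff (2 * d) = 1 := by
        rw [← hdeg2]
        exact hmon.coeff_natDegree
      rw [hc1, mul_one]
      exact hψmonic.coeff_natDegree
    · intro i hi hne
      rw [Finset.mem_range] at hi
      rw [mul_assoc, coeff_C_mul]
      have hz : (((X ^ 2 + 1 : Polynomial ℚ) ^ i) * X ^ (d - i)).coeff (2 * d) = 0 := by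
        apply coeff_eq_zero_of_natDegree_lt
        have h1 : (((X ^ 2 + 1 : Polynomial ℚ) ^ i) * X ^ (d - i)).natDegree ≤
            i * 2 + (d - i) := by
          refine natDegree_mul_le.trans ?_
          gcongr
          · rw [hX21.natDegree_pow]
            have : ((X ^ 2 + 1 : Polynomial ℚ)).natDegree = 2 := by
              simpa using natDegree_X_pow_add_C (n := 2) (r := (1 : ℚ))
            rw [this]
          · rw [natDegree_X_pow]
        omega
      rw [hz, mul_zero]
    · intro h
      exact absurd (Finset.self_mem_range_succ d) h
  have hQne : Q ≠ 0 := fun h => by simp [h] at hQcoeff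
  have hQdeg : Q.natDegree ≤ 2 * d := by
    rw [hQdef]
    refine natDegree_sum_le_of_forall_le _ _ ?_
    intro i hi
    rw [Finset.mem_range] at hi
    refine natDegree_mul_le.trans ?_
    have h2 : (C (ψ.coeff i) * (X ^ 2 + 1) ^ i : Polynomial ℚ).natDegree ≤ i * 2 := by
      refine natDegree_mul_le.trans ?_
      rw [natDegree_C]
      have h3 : ((X ^ 2 + 1 : Polynomial ℚ) ^ i).natDegree ≤ i * 2 := by
        rw [hX21.natDegree_pow]
        have : ((X ^ 2 + 1 : Polynomial ℚ)).natDegree = 2 := by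
          simpa using natDegree_X_pow_add_C (n := 2) (r := (1 : ℚ))
        rw [this]
      omega
    have h4 : (X ^ (d - i) : Polynomial ℚ).natDegree ≤ d - i := by rw [natDegree_X_pow]
    omega
  have hmind : (minpoly ℚ ζ).natDegree = p - 1 := by
    rw [← cyclotomic_eq_minpoly_rat hprim (by omega), natDegree_cyclotomic,
      Nat.totient_mul (((Nat.coprime_primes Nat.prime_two hp).mpr (by omega))),
      Nat.totient_two, Nat.totient_prime hp, one_mul]
  have hdvdQ : minpoly ℚ ζ ∣ Q := minpoly.dvd ℚ ζ hQζ
  have hlow : p - 1 ≤ 2 * d :=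
    hmind ▸ (natDegree_le_of_dvd hdvdQ hQne).trans hQdeg
  have hdvdμ : ψ ∣ μ.map (algebraMap ℤ ℚ) := minpoly.dvd ℚ lam hμQ0
  have hμmapdeg : (μ.map (algebraMap ℤ ℚ)).natDegree = q + 3 := by
    rw [hμmonic.natDegree_map, hμdeg]
  have hψeq : μ.map (algebraMap ℤ ℚ) = ψ := by
    refine eq_of_monic_of_dvd_of_natDegree_le hψmonic (hμmonic.map _) hdvdμ ?_
    rw [hμmapdeg]
    omega
  have hker : ∀ f : Polynomial ℤ, Polynomial.aeval lam f = 0 → μ ∣ f := by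
    intro f hf
    have h1 : ψ ∣ f.map (algebraMap ℤ ℚ) :=
      minpoly.dvd ℚ lam (by rw [aeval_map_algebraMap, hf])
    rw [← hψeq] at h1
    exact (map_dvd_map (algebraMap ℤ ℚ) (algebraMap ℤ ℚ).injective_int hμmonic).mp h1
  -- the remainder r
  have hP2 := Ppoly_monic (q + 1)
  have hP1 := Ppoly_monic q
  have hX21' : ((X ^ 2 + 1 : Polynomial ℤ)).Monic := by
    have h1 : (1 : Polynomial ℤ).degree < (X ^ 2 : Polynomial ℤ).degree := by
      rw [degree_one, degree_X_pow]
      exact_mod_cast by norm_num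
    exact (monic_X_pow 2).add_of_left h1
  have hX21deg' : ((X ^ 2 + 1 : Polynomial ℤ)).natDegree = 2 := by
    simpa using natDegree_X_pow_add_C (n := 2) (r := (1 : ℤ))
  set A : Polynomial ℤ := (X ^ 2 + 1) * Ppoly (q + 2) with hAdef
  have hAmonic : A.Monic := hX21'.mul hP2.1
  have hAdeg : A.natDegree = q + 3 := by
    rw [hAdef, hX21'.natDegree_mul hP2.1, hX21deg', hP2.2]
    omega
  set r : Polynomial ℤ := A - μ with hrdef
  have hrdeg : r.natDegree ≤ q + 2 := by
    by_cases h : r = 0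
    · rw [h, natDegree_zero]; omega
    have h1 : A.degree = μ.degree := by
      rw [degree_eq_natDegree hAmonic.ne_zero, degree_eq_natDegree hμmonic.ne_zero, hAdeg, hμdeg]
    have h2 := degree_sub_lt h1 hAmonic.ne_zero
      (by rw [hAmonic.leadingCoeff, hμmonic.leadingCoeff])
    rw [degree_eq_natDegree hAmonic.ne_zero, hAdeg] at h2
    have := (natDegree_lt_iff_degree_lt h).mpr h2
    omega
  have hrval : Polynomial.aeval lam r = (lam ^ 2 + 1) * Polynomial.aeval lam (Ppoly (q + 2)) := by
    rw [hrdef, map_sub, hμ0, sub_zero, hAdef, map_mul, map_add, map_pow, aeval_X, map_one]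
  -- mod 2 structure
  set φ : ℤ →+* ZMod 2 := Int.castRingHom (ZMod 2) with hφdef
  have h2z : (2 : Polynomial (ZMod 2)) = 0 := by
    rw [← map_ofNat (C : ZMod 2 →+* Polynomial (ZMod 2)) 2, show ((2 : ZMod 2)) = 0 from rfl,
      map_zero]
  have e4 : (Ppoly (q + 4)).map φ = X * (Ppoly (q + 3)).map φ + (Ppoly (q + 2)).map φ := by
    rw [Ppoly_two_step (q + 2), Polynomial.map_add, Polynomial.map_mul, map_X]
  have e3 : (Ppoly (q + 3)).map φ = X * (Ppoly (q + 2)).map φ + (Ppoly (q + 1)).map φ := by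
    rw [Ppoly_two_step (q + 1), Polynomial.map_add, Polynomial.map_mul, map_X]
  have hrmap : r.map φ = (Ppoly (q + 3)).map φ + X * (Ppoly (q + 1)).map φ := by
    rw [hrdef, hAdef, hμdef, Polynomial.map_sub, Polynomial.map_sub, Polynomial.map_mul,
      Polynomial.map_add, Polynomial.map_pow, map_X, Polynomial.map_one,
      Spoly_map_eq (q + 4), Spoly_map_eq (q + 3)]
    rw [e4, e3]
    linear_combination (-(X * (Ppoly (q + 1)).map φ)) * h2z
  have hrcoeff : ((r.coeff (q + 1) : ZMod 2)) = 1 := by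
    have hc := congrArg (fun s => s.coeff (q + 1)) hrmap
    simp only [coeff_add, coeff_map, coeff_X_mul] at hc
    rw [hφdef] at hc
    have hpar : (Ppoly (q + 3)).coeff (q + 1) = 0 := Ppoly_coeff_eq_zero _ _ (by omega)
    have hlead : (Ppoly (q + 1)).coeff q = 1 := by
      have := hP1.1.coeff_natDegree
      rwa [hP1.2] at this
    rw [hpar, hlead] at hc
    simpa using hc
  have hrmod : r.coeff (q + 1) % 2 = 1 := by
    rcases Int.emod_two_eq (r.coeff (q + 1)) with h | h
    · exfalso
      have : ((r.coeff (q + 1) : ZMod 2)) = 0 :=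
        (ZMod.intCast_zmod_eq_zero_iff_dvd _ 2).mpr (Int.dvd_of_emod_eq_zero h)
      rw [this] at hrcoeff
      exact absurd hrcoeff (by decide)
    · exact h
  refine ⟨⟨fun j => r.coeff j, ?_, ?_⟩, ⟨(q + 1 : ℤ), by rw [hq]; push_cast; ring⟩, ?_⟩
  · rw [← hrval, aeval_eq_sum_range' (by omega : r.natDegree < q + 3) lam]
    exact Finset.sum_congr rfl fun j _ => zsmul_eq_mul _ _
  · rw [hrmod, hq]
    push_cast
    omega
  · rintro ⟨z, hz⟩
    obtain ⟨h, hh⟩ : ∃ h : Polynomial ℤ, Polynomial.aeval lam h = (z : ℝ) := by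
      have hz2 : (z : ℝ) ∈ (Polynomial.aeval lam : Polynomial ℤ →ₐ[ℤ] ℝ).range := by
        rw [← Algebra.adjoin_singleton_eq_range_aeval]
        exact z.2
      obtain ⟨f, hf⟩ := hz2
      exact ⟨f, hf⟩
    set f : Polynomial ℤ := A - Ppoly (q + 3) - 2 * h with hfdef
    have hf0 : Polynomial.aeval lam f = 0 := by
      rw [hfdef, hAdef]
      simp only [map_sub, map_mul, map_add, map_pow, aeval_X, map_one, map_ofNat, hh]
      linear_combination hz
    have hdvd : μ ∣ f := hker f hf0
    have hdvd2 : μ.map φ ∣ f.map φ := Polynomial.map_dvd _ hdvd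
    have hfmap : f.map φ = μ.map φ + X * (Ppoly (q + 1)).map φ := by
      have hfr : f = r + μ - Ppoly (q + 3) - 2 * h := by rw [hrdef]; ring
      rw [hfr, Polynomial.map_sub, Polynomial.map_sub, Polynomial.map_add, hrmap,
        Polynomial.map_mul]
      rw [show ((2 : Polynomial ℤ)).map φ = (2 : Polynomial (ZMod 2)) from by
        simp [Polynomial.map_ofNat]]
      rw [h2z, zero_mul, sub_zero]
      ring
    have hdvd3 : μ.map φ ∣ X * (Ppoly (q + 1)).map φ := by
      have h' : μ.map φ ∣ μ.map φ + X * (Ppoly (q + 1)).map φ := hfmap ▸ hdvd2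
      exact (dvd_add_right (dvd_refl (μ.map φ))).mp h'
    have hPne : ((Ppoly (q + 1)).map φ) ≠ 0 := (hP1.1.map φ).ne_zero
    have hXPne : X * (Ppoly (q + 1)).map φ ≠ 0 := mul_ne_zero X_ne_zero hPne
    have hled : (X * (Ppoly (q + 1)).map φ).natDegree = q + 1 := by
      rw [monic_X.natDegree_mul (hP1.1.map φ), natDegree_X, hP1.1.natDegree_map, hP1.2]
      omega
    have := natDegree_le_of_dvd hdvd3 hXPne
    rw [hled, hμmonic.natDegree_map, hμdeg] at this
    omega
end

section
/- Let p ≥ 7 be prime and λ = 2·cos(π/p). When λ^{(p+1)/2} is written in the ℤ-basis 1, λ, …, λ^{(p−3)/2} of ℤ[λ], the coefficient of λ^{(p−3)/2} equals (p−3)/2 + 1 = (p−1)/2. -/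
open Polynomial

/-- Monic Chebyshev-like polynomials of the second kind over `ℤ`:
`S n (2 cos θ) = sin ((n+1)θ)/sin θ`. -/
noncomputable def chebS : ℕ → Polynomial ℤ
  | 0 => 1
  | 1 => X
  | (n+2) => X * chebS (n+1) - chebS n

lemma chebS_deg : ∀ n, (chebS n).natDegree ≤ n
  | 0 => by simp [chebS]
  | 1 => by simp [chebS]
  | (n+2) => by
    have h1 := chebS_deg (n+1)
    have h0 := chebS_deg n
    rw [chebS]
    refine le_trans (natDegree_sub_le _ _) ?_
    refine max_le (le_trans (natDegree_mul_le) ?_) (by omega)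
    simp [natDegree_X]; omega

lemma chebS_coeff_self : ∀ n, (chebS n).coeff n = 1
  | 0 => by simp [chebS]
  | 1 => by simp [chebS]
  | (n+2) => by
    have h1 := chebS_coeff_self (n+1)
    have h0 : (chebS n).coeff (n+2) = 0 :=
      coeff_eq_zero_of_natDegree_lt (lt_of_le_of_lt (chebS_deg n) (by omega))
    rw [chebS, coeff_sub, coeff_X_mul, h1, h0]
    ring

lemma chebS_coeff_sub1 : ∀ n, (chebS (n+1)).coeff n = 0
  | 0 => by simp [chebS]
  | (n+1) => by
    have h1 := chebS_coeff_sub1 n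
    have h0 : (chebS n).coeff (n+1) = 0 :=
      coeff_eq_zero_of_natDegree_lt (lt_of_le_of_lt (chebS_deg n) (by omega))
    show (chebS (n+2)).coeff (n+1) = 0
    rw [chebS, coeff_sub, coeff_X_mul, h1, h0]
    ring

lemma chebS_coeff_sub2 : ∀ n, (chebS (n+2)).coeff n = -((n : ℤ) + 1)
  | 0 => by
    show (chebS 2).coeff 0 = -1
    rw [chebS]
    simp [chebS]
  | (n+1) => by
    have h1 := chebS_coeff_sub2 n
    have h0 := chebS_coeff_self (n+1)
    show (chebS (n+3)).coeff (n+1) = _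
    rw [show n+3 = (n+1)+2 by ring, chebS, coeff_sub, coeff_X_mul, h1, h0]
    push_cast; ring

lemma chebS_eval (θ : ℝ) : ∀ n : ℕ,
    ((chebS n).map (Int.castRingHom ℝ)).eval (2 * Real.cos θ) * Real.sin θ
      = Real.sin (((n : ℝ) + 1) * θ)
  | 0 => by simp [chebS]
  | 1 => by
    simp only [chebS, Polynomial.map_X, eval_X]
    rw [show ((1 : ℕ) : ℝ) + 1 = 2 by norm_num, Real.sin_two_mul]
    ring
  | (n+2) => by
    have h1 := chebS_eval θ (n+1)
    have h0 := chebS_eval θ n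
    rw [chebS]
    simp only [Polynomial.map_sub, Polynomial.map_mul, Polynomial.map_X, eval_sub,
      eval_mul, eval_X]
    push_cast at h1 h0 ⊢
    have hadd : Real.sin ((((n : ℝ) + 2) * θ) + θ)
        = Real.sin (((n : ℝ)+2)*θ) * Real.cos θ + Real.cos (((n : ℝ)+2)*θ) * Real.sin θ :=
      Real.sin_add _ _
    have hsub : Real.sin ((((n : ℝ) + 2) * θ) - θ)
        = Real.sin (((n : ℝ)+2)*θ) * Real.cos θ - Real.cos (((n : ℝ)+2)*θ) * Real.sin θ :=
      Real.sin_sub _ _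
    rw [show ((n : ℝ) + 2 + 1) * θ = (((n : ℝ) + 2) * θ) + θ by ring, hadd]
    rw [show ((n : ℝ) + 1 + 1) * θ = ((n : ℝ) + 2) * θ by ring] at h1
    rw [show ((n : ℝ) + 1) * θ = (((n : ℝ) + 2) * θ) - θ by ring, hsub] at h0
    linear_combination (2 * Real.cos θ) * h1 - h0

/-- For a prime `p ≥ 7` and `λ = 2cos(π/p)`: writing `λ^{(p+1)/2}` in the `ℤ`-basis
`1, λ, …, λ^{(p−3)/2}` of `ℤ[λ]`, the coefficient of `λ^{(p−3)/2}` equals `(p−1)/2`. -/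
theorem stmt19 (p : ℕ) (hp : p.Prime) (h7 : 7 ≤ p)
    (lam : ℝ) (hlam : lam = 2 * Real.cos (Real.pi / p)) :
    ∃ c : ℕ → ℤ,
      lam ^ ((p + 1) / 2) = ∑ j ∈ Finset.range ((p - 1) / 2), (c j : ℝ) * lam ^ j ∧
      c ((p - 3) / 2) = ((p : ℤ) - 1) / 2 := by
  have hodd : p % 2 = 1 := Nat.odd_iff.mp (hp.odd_of_ne_two (by omega))
  obtain ⟨n, rfl⟩ : ∃ n, p = 2*n+7 := ⟨(p-7)/2, by omega⟩
  set F : Polynomial ℤ := chebS (n+3) - chebS (n+2) with hF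
  set R : Polynomial ℤ := X^(n+4) - (X+1) * F with hR
  -- coefficients of F
  have hFc3 : F.coeff (n+3) = 1 := by
    rw [hF, coeff_sub, chebS_coeff_self,
      coeff_eq_zero_of_natDegree_lt (lt_of_le_of_lt (chebS_deg (n+2)) (by omega))]
    ring
  have hFc2 : F.coeff (n+2) = -1 := by
    rw [hF, coeff_sub, chebS_coeff_sub1, chebS_coeff_self]
    norm_num
  have hFc1 : F.coeff (n+1) = -((n : ℤ)+2) := by
    rw [hF, coeff_sub, chebS_coeff_sub2, chebS_coeff_sub1]
    push_cast; ring
  have hFdeg : F.natDegree ≤ n+3 :=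
    le_trans (natDegree_sub_le _ _) (max_le (chebS_deg _) (le_trans (chebS_deg _) (by omega)))
  have hXF : ∀ k, ((X+1) * F).coeff (k+1) = F.coeff k + F.coeff (k+1) := by
    intro k
    rw [add_mul, one_mul, coeff_add, coeff_X_mul]
  -- coefficient of R at n+2
  have hRc : R.coeff (n+2) = (n : ℤ) + 3 := by
    rw [hR, coeff_sub, coeff_X_pow, show n+2 = (n+1)+1 by ring, hXF]
    rw [show (n+1)+1 = n+2 by ring, hFc1, hFc2]
    simp; ring
  -- degree bound for R
  have hRdeg : R.natDegree ≤ n+2 := by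
    rw [natDegree_le_iff_coeff_eq_zero]
    intro k hk
    obtain ⟨j, rfl⟩ : ∃ j, k = n+3+j := ⟨k-(n+3), by omega⟩
    rw [hR, coeff_sub, coeff_X_pow]
    match j with
    | 0 =>
      rw [show n+3+0 = (n+2)+1 by ring, hXF, show (n+2)+1 = n+3 by ring, hFc2, hFc3]
      norm_num
    | 1 =>
      rw [show n+3+1 = (n+3)+1 by ring, hXF, hFc3,
        coeff_eq_zero_of_natDegree_lt (lt_of_le_of_lt hFdeg (by omega))]
      norm_num
    | (j+2) =>
      rw [show n+3+(j+2) = (n+4+j)+1 by ring, hXF,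
        coeff_eq_zero_of_natDegree_lt (lt_of_le_of_lt hFdeg (by omega)),
        coeff_eq_zero_of_natDegree_lt (lt_of_le_of_lt hFdeg (by omega))]
      norm_num; omega
  -- trigonometry
  set θ : ℝ := Real.pi / (2*n+7) with hθ
  have hp7 : ((2*n+7 : ℕ) : ℝ) = 2*(n:ℝ)+7 := by push_cast; ring
  have hθpos : 0 < θ := by
    rw [hθ]; positivity
  have hθlt : θ < Real.pi := by
    have hc : (0:ℝ) < 2*(n:ℝ)+7 := by positivity
    rw [hθ, div_lt_iff₀ hc]
    nlinarith [Real.pi_pos, Nat.cast_nonneg (α := ℝ) n]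
  have hsin : Real.sin θ ≠ 0 := ne_of_gt (Real.sin_pos_of_pos_of_lt_pi hθpos hθlt)
  have hlam' : lam = 2 * Real.cos θ := by rw [hlam, hθ, hp7]
  -- F vanishes at lam
  have hF0 : (F.map (Int.castRingHom ℝ)).eval lam = 0 := by
    have h3 := chebS_eval θ (n+3)
    have h2 := chebS_eval θ (n+2)
    have key : Real.sin (((n : ℝ)+3+1) * θ) = Real.sin (((n : ℝ)+2+1) * θ) := by
      rw [show ((n : ℝ)+3+1) * θ = Real.pi - ((n : ℝ)+2+1) * θ by
        rw [hθ]; field_simp; ring]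
      exact Real.sin_pi_sub _
    have : ((F.map (Int.castRingHom ℝ)).eval lam) * Real.sin θ = 0 := by
      rw [hF, Polynomial.map_sub, eval_sub, sub_mul, hlam']
      push_cast at h3 h2
      rw [h3, h2, key, sub_self]
    exact (mul_eq_zero.mp this).resolve_right hsin
  -- value of R at lam
  have hRval : (R.map (Int.castRingHom ℝ)).eval lam = lam ^ (n+4) := by
    rw [hR]
    simp only [Polynomial.map_sub, Polynomial.map_mul, Polynomial.map_add,
      Polynomial.map_pow, Polynomial.map_X, Polynomial.map_one, eval_sub, eval_mul,
      eval_add, eval_pow, eval_X, eval_one, hF0]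
    ring
  refine ⟨fun j => R.coeff j, ?_, ?_⟩
  · have hdegmap : (R.map (Int.castRingHom ℝ)).natDegree < n+3 :=
      lt_of_le_of_lt (le_trans natDegree_map_le hRdeg) (by omega)
    have := Polynomial.eval_eq_sum_range' hdegmap lam
    rw [show (2*n+7+1)/2 = n+4 by omega, show (2*n+7-1)/2 = n+3 by omega,
      ← hRval, this]
    apply Finset.sum_congr rfl
    intro j _
    rw [Polynomial.coeff_map]
    simp
  · simp only [show (2*n+7-3)/2 = n+2 from by omega, hRc]
    push_cast
    omega
end
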